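/- arXiv:1307.8028 — 6 statements merged into one kernel-verified Lean document; each statement's English description precedes it below -/
import Mathlib

section
/- Let δ ∈ (0,1), n ≥ 1, c = 2δ^(n²), d = 4δ^(n²+n) with δ^n ≤ 1/4. If complex numbers z₁, z₂ satisfy (z₁^n - c)/(1 - c·z₁^n) = z₂^(n²), |z₁^n| ≤ 1, and |z₂| < δ, then |z₁|^n < 4δ^(n²). -/
/-! The relation says that `z₁ ^ n` is mapped to `z₂ ^ (n ^ 2)` by the Blaschke-type map
`w ↦ (w - c) / (1 - c w)`. Clearing the denominator, whose norm is at most `2` on the unit disc,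
gives `‖z₁ ^ n - c‖ ≤ 2 ‖z₂‖ ^ (n ^ 2) < 2 δ ^ (n ^ 2)`, and the triangle inequality adds
`‖c‖ = 2 δ ^ (n ^ 2)`. -/

lemma norm_sub_le_two_mul_of_div_one_sub_mul_eq {𝕜 : Type*} [NormedDivisionRing 𝕜]
    {w c u : 𝕜} (hden : 1 - c * w ≠ 0) (h : (w - c) / (1 - c * w) = u)
    (hc : ‖c‖ ≤ 1) (hw : ‖w‖ ≤ 1) :
    ‖w - c‖ ≤ 2 * ‖u‖ := by
  have hden_le : ‖1 - c * w‖ ≤ 2 :=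
    calc ‖1 - c * w‖ ≤ ‖(1 : 𝕜)‖ + ‖c‖ * ‖w‖ := by
          rw [← norm_mul]; exact norm_sub_le _ _
      _ ≤ 1 + 1 * 1 := by rw [norm_one]; gcongr
      _ = 2 := by norm_num
  rw [div_eq_iff hden] at h
  rw [h, norm_mul, mul_comm]
  gcongr

theorem stmt_2_general (δ : ℝ) (n : ℕ) (hn : 1 ≤ n)
    (hδn : δ ^ n ≤ 1 / 4) (z₁ z₂ : ℂ)
    (hden : 1 - (2 * δ ^ (n ^ 2) : ℂ) * z₁ ^ n ≠ 0)
    (hrel : (z₁ ^ n - (2 * δ ^ (n ^ 2) : ℂ)) / (1 - (2 * δ ^ (n ^ 2) : ℂ) * z₁ ^ n)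
        = z₂ ^ (n ^ 2))
    (hz1 : ‖z₁ ^ n‖ ≤ 1) (hz2 : ‖z₂‖ < δ) :
    ‖z₁‖ ^ n < 4 * δ ^ (n ^ 2) := by
  have hδ : 0 ≤ δ := (norm_nonneg z₂).trans hz2.le
  have hsmall : δ ^ (n ^ 2) ≤ 1 / 4 :=
    calc δ ^ (n ^ 2) = (δ ^ n) ^ n := by rw [sq, pow_mul]
      _ ≤ δ ^ n := pow_le_of_le_one (by positivity) (by linarith) (by omega)
      _ ≤ 1 / 4 := hδn
  have hc : ‖(2 * δ ^ (n ^ 2) : ℂ)‖ = 2 * δ ^ (n ^ 2) := by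
    norm_cast
    exact Real.norm_of_nonneg (by positivity)
  have hu : ‖z₂ ^ (n ^ 2)‖ < δ ^ (n ^ 2) := by
    rw [norm_pow]
    exact pow_lt_pow_left₀ hz2 (norm_nonneg _) (by positivity)
  have hsub := norm_sub_le_two_mul_of_div_one_sub_mul_eq hden hrel (by linarith) hz1
  calc ‖z₁‖ ^ n = ‖z₁ ^ n‖ := (norm_pow _ _).symm
    _ ≤ ‖z₁ ^ n - (2 * δ ^ (n ^ 2) : ℂ)‖ + ‖(2 * δ ^ (n ^ 2) : ℂ)‖ := norm_le_norm_sub_add _ _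
    _ < 4 * δ ^ (n ^ 2) := by linarith

theorem stmt_2 (δ : ℝ) (n : ℕ) (hδ0 : 0 < δ) (hδ1 : δ < 1) (hn : 1 ≤ n)
    (hδn : δ ^ n ≤ 1 / 4) (z₁ z₂ : ℂ)
    (hden : 1 - (2 * δ ^ (n ^ 2) : ℂ) * z₁ ^ n ≠ 0)
    (hrel : (z₁ ^ n - (2 * δ ^ (n ^ 2) : ℂ)) / (1 - (2 * δ ^ (n ^ 2) : ℂ) * z₁ ^ n)
        = z₂ ^ (n ^ 2))
    (hz1 : ‖z₁ ^ n‖ ≤ 1) (hz2 : ‖z₂‖ < δ) :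
    ‖z₁‖ ^ n < 4 * δ ^ (n ^ 2) :=
  stmt_2_general δ n hn hδn z₁ z₂ hden hrel hz1 hz2
end

section
/- Let δ ∈ (0,1), n ≥ 1, c = 2δ^(n²), d = 4δ^(n²+n). For every pair (z₁, z₂) ∈ ℂ² with d^(1/n) < |z₁| < 1, |z₂| < 1, 1 - c·z₁^n ≠ 0, and (z₁^n - c)/(1 - c·z₁^n) = z₂^(n²), we have max(|d^(1/n)/z₁|, |z₂|) ≥ δ. -/
/-!
Suppose both `‖d^(1/n) / z₁‖ < δ` and `‖z₂‖ < δ`. The first gives `‖z₁‖ⁿ > d / δⁿ = 2c`, so the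
numerator of the relation has norm `> c`, while its right-hand side has norm `< δ^(n²) (1 + c)`.
Hence `c < δ^(n²) (1 + c)`, i.e. `δ^(n²) > 1/2`, contradicting `δ^(n²) = (δⁿ)ⁿ ≤ 1/4`.
-/

lemma lt_mul_norm_pow_of_norm_rpow_inv_div_lt {a δ : ℝ} {n : ℕ} {z : ℂ} (ha : 0 ≤ a)
    (hn : n ≠ 0) (hz : z ≠ 0) (h : ‖((a ^ ((1 : ℝ) / n) : ℝ) : ℂ) / z‖ < δ) :
    a < (δ * ‖z‖) ^ n := by
  have hroot : 0 ≤ a ^ ((1 : ℝ) / n) := Real.rpow_nonneg ha _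
  rw [norm_div, Complex.norm_real, Real.norm_of_nonneg hroot,
    div_lt_iff₀ (norm_pos_iff.mpr hz)] at h
  calc a = (a ^ ((1 : ℝ) / n)) ^ n := by rw [one_div, Real.rpow_inv_natCast_pow ha hn]
    _ < (δ * ‖z‖) ^ n := pow_lt_pow_left₀ h hroot hn

lemma norm_sub_norm_le_of_div_one_sub_mul_eq {𝕜 : Type*} [NormedField 𝕜] {c w u : 𝕜}
    (hw : ‖w‖ ≤ 1) (hden : 1 - c * w ≠ 0) (h : (w - c) / (1 - c * w) = u) :
    ‖w‖ - ‖c‖ ≤ ‖u‖ * (1 + ‖c‖) := by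
  rw [div_eq_iff hden] at h
  have hden_le : ‖1 - c * w‖ ≤ 1 + ‖c‖ :=
    calc ‖1 - c * w‖ ≤ ‖(1 : 𝕜)‖ + ‖c‖ * ‖w‖ := (norm_sub_le _ _).trans_eq (by rw [norm_mul])
      _ ≤ 1 + ‖c‖ := by rw [norm_one]; gcongr; exact mul_le_of_le_one_right (norm_nonneg c) hw
  calc ‖w‖ - ‖c‖ ≤ ‖w - c‖ := norm_sub_norm_le w c
    _ = ‖u‖ * ‖1 - c * w‖ := by rw [h, norm_mul]
    _ ≤ ‖u‖ * (1 + ‖c‖) := by gcongr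

theorem stmt_4_general (δ : ℝ) (n : ℕ) (hδ0 : 0 < δ) (hn : 1 ≤ n)
    (hδn : δ ^ n ≤ 1 / 4) (z₁ z₂ : ℂ)
    (hz1lo : ((4 * δ ^ (n ^ 2 + n)) ^ ((1 : ℝ) / n) : ℝ) < ‖z₁‖)
    (hz1hi : ‖z₁‖ < 1)
    (hden : 1 - (2 * δ ^ (n ^ 2) : ℂ) * z₁ ^ n ≠ 0)
    (hrel : (z₁ ^ n - (2 * δ ^ (n ^ 2) : ℂ)) / (1 - (2 * δ ^ (n ^ 2) : ℂ) * z₁ ^ n)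
        = z₂ ^ (n ^ 2)) :
    max (‖(((4 * δ ^ (n ^ 2 + n)) ^ ((1 : ℝ) / n) : ℝ) / z₁)‖)
        (‖z₂‖) ≥ δ := by
  by_contra! h
  obtain ⟨h₁, h₂⟩ := max_lt_iff.mp h
  have hz₁ : z₁ ≠ 0 := norm_pos_iff.mp ((Real.rpow_nonneg (by positivity) _).trans_lt hz1lo)
  have hδn₀ : 0 < δ ^ n := pow_pos hδ0 n
  have hz₁_pow : 4 * δ ^ (n ^ 2) < ‖z₁‖ ^ n := by
    have := lt_mul_norm_pow_of_norm_rpow_inv_div_lt (by positivity) (by omega) hz₁ h₁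
    rw [mul_pow, pow_add, mul_left_comm] at this
    exact lt_of_mul_lt_mul_right (by linarith) hδn₀.le
  have hc : ‖(2 * δ ^ (n ^ 2) : ℂ)‖ = 2 * δ ^ (n ^ 2) := by
    rw [norm_mul, norm_pow, Complex.norm_real, Real.norm_of_nonneg hδ0.le, Complex.norm_two]
  have hmob := norm_sub_norm_le_of_div_one_sub_mul_eq
    (by rw [norm_pow]; exact pow_le_one₀ (norm_nonneg _) hz1hi.le) hden hrel
  rw [hc, norm_pow, norm_pow] at hmob
  have hz₂_pow : ‖z₂‖ ^ (n ^ 2) < δ ^ (n ^ 2) := pow_lt_pow_left₀ h₂ (norm_nonneg _) (by positivity)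
  have hδn₂ : δ ^ (n ^ 2) ≤ 1 / 4 :=
    calc δ ^ (n ^ 2) = (δ ^ n) ^ n := by rw [sq, pow_mul]
      _ ≤ (1 / 4) ^ n := pow_le_pow_left₀ hδn₀.le hδn n
      _ ≤ 1 / 4 := pow_le_of_le_one (by norm_num) (by norm_num) (by omega)
  nlinarith [pow_pos hδ0 (n ^ 2)]

theorem stmt_4 (δ : ℝ) (n : ℕ) (hδ0 : 0 < δ) (hδ1 : δ < 1) (hn : 1 ≤ n)
    (hδn : δ ^ n ≤ 1 / 4) (z₁ z₂ : ℂ)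
    (hz1lo : ((4 * δ ^ (n ^ 2 + n)) ^ ((1 : ℝ) / n) : ℝ) < ‖z₁‖)
    (hz1hi : ‖z₁‖ < 1) (hz2 : ‖z₂‖ < 1)
    (hden : 1 - (2 * δ ^ (n ^ 2) : ℂ) * z₁ ^ n ≠ 0)
    (hrel : (z₁ ^ n - (2 * δ ^ (n ^ 2) : ℂ)) / (1 - (2 * δ ^ (n ^ 2) : ℂ) * z₁ ^ n)
        = z₂ ^ (n ^ 2)) :
    max (‖(((4 * δ ^ (n ^ 2 + n)) ^ ((1 : ℝ) / n) : ℝ) / z₁)‖)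
        (‖z₂‖) ≥ δ :=
  stmt_4_general δ n hδ0 hn hδn z₁ z₂ hz1lo hz1hi hden hrel
end

section
/- Let 0 < d < c < 1 and let f be a function holomorphic on a neighborhood of the closed annulus {z ∈ ℂ : d ≤ |z| ≤ 1}. Suppose |f(z)| ≤ K·ε for all |z| = 1 and |f(z)| ≤ K for all |z| = d. Then |f(c)| ≤ K·ε/(1-c) + K·d/(c-d). -/
/-!
By the Cauchy integral formula on the annulus, `2πi f(c)` is the difference of the integrals of
`f z / (z - c)` over `|z| = 1` and `|z| = d`. On these circles `|z - c|` is at least `1 - c` and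
`c - d` respectively, so the length-times-supremum estimate bounds the two integrals by
`2π K ε / (1 - c)` and `2π d K / (c - d)`.
-/

open Metric Set Real

namespace Complex

variable {E : Type*} [NormedAddCommGroup E] [NormedSpace ℂ E]

theorem circleIntegral_sub_inv_of_notMem_closedBall {c w : ℂ} {R : ℝ} (hR : 0 ≤ R)
    (hw : w ∉ closedBall c R) : (∮ z in C(c, R), (z - w)⁻¹) = 0 := by
  have hdiff : ∀ z ∈ closedBall c R, DifferentiableAt ℂ (fun z => (z - w)⁻¹) z := fun z hz =>
    (differentiableAt_id.sub_const w).inv (sub_ne_zero.2 (ne_of_mem_of_not_mem hz hw))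
  exact circleIntegral_eq_zero_of_differentiable_on_off_countable hR countable_empty
    (fun z hz => (hdiff z hz).continuousAt.continuousWithinAt)
    (fun z hz => hdiff z (ball_subset_closedBall hz.1))

theorem norm_circleIntegral_sub_inv_smul_le {c w : ℂ} {R M : ℝ} {f : ℂ → E} (hR : 0 ≤ R)
    (hw : ‖w - c‖ ≠ R) (hf : ∀ z ∈ sphere c R, ‖f z‖ ≤ M) :
    ‖∮ z in C(c, R), (z - w)⁻¹ • f z‖ ≤ 2 * π * R * (M / |R - ‖w - c‖|) := by
  have hδ : 0 < |R - ‖w - c‖| := abs_pos.2 (sub_ne_zero.2 hw.symm)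
  refine circleIntegral.norm_integral_le_of_norm_le_const hR fun z hz => ?_
  have hdist : |R - ‖w - c‖| ≤ ‖z - w‖ := by
    simpa [← mem_sphere_iff_norm.1 hz] using abs_norm_sub_norm_le (z - c) (w - c)
  rw [norm_smul, norm_inv, inv_mul_eq_div]
  calc ‖f z‖ / ‖z - w‖ ≤ ‖f z‖ / |R - ‖w - c‖| :=
        div_le_div_of_nonneg_left (norm_nonneg _) hδ hdist
    _ ≤ M / |R - ‖w - c‖| := div_le_div_of_nonneg_right (hf z hz) hδ.le

variable [CompleteSpace E]

theorem circleIntegral_dslope {c w : ℂ} {R : ℝ} {f : ℂ → E} (hR : 0 ≤ R)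
    (hw : w ∉ sphere c R) (hf : ContinuousOn f (sphere c R)) :
    (∮ z in C(c, R), dslope f w z) =
      (∮ z in C(c, R), (z - w)⁻¹ • f z) - (∮ z in C(c, R), (z - w)⁻¹) • f w := by
  have hne : ∀ z ∈ sphere c R, z ≠ w := fun z hz => ne_of_mem_of_not_mem hz hw
  have hinv : ContinuousOn (fun z => (z - w)⁻¹) (sphere c R) :=
    (continuousOn_id.sub continuousOn_const).inv₀ fun z hz => sub_ne_zero.2 (hne z hz)
  have hint : CircleIntegrable (fun z => (z - w)⁻¹ • f z) c R :=
    (hinv.smul hf).circleIntegrable hR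
  have hint' : CircleIntegrable (fun z => (z - w)⁻¹ • f w) c R :=
    (hinv.smul continuousOn_const).circleIntegrable hR
  rw [← circleIntegral.integral_smul_const, ← circleIntegral.integral_sub hint hint']
  refine circleIntegral.integral_congr hR fun z hz => ?_
  simp only [dslope_of_ne f (hne z hz), slope, vsub_eq_sub, smul_sub]

theorem circleIntegral_sub_inv_smul_sub_of_differentiable_on_annulus {c w : ℂ} {r R : ℝ}
    {f : ℂ → E} (h0 : 0 < r) (hw : w ∈ ball c R \ closedBall c r)
    (hc : ContinuousOn f (closedBall c R \ ball c r))
    (hd : ∀ z ∈ ball c R \ closedBall c r, DifferentiableAt ℂ f z) :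
    (∮ z in C(c, R), (z - w)⁻¹ • f z) - (∮ z in C(c, r), (z - w)⁻¹ • f z) =
      (2 * π * I : ℂ) • f w := by
  have hrw : r < dist w c := not_le.1 hw.2
  have hwR : dist w c < R := hw.1
  have hopen_sub : ball c R \ closedBall c r ⊆ closedBall c R \ ball c r :=
    sdiff_subset_sdiff ball_subset_closedBall ball_subset_closedBall
  have hnhds : closedBall c R \ ball c r ∈ nhds w :=
    Filter.mem_of_superset ((isOpen_ball.sdiff isClosed_closedBall).mem_nhds hw) hopen_sub
  have hcF : ContinuousOn (dslope f w) (closedBall c R \ ball c r) :=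
    (continuousOn_dslope hnhds).2 ⟨hc, hd w hw⟩
  have hdF : ∀ z ∈ (ball c R \ closedBall c r) \ {w}, DifferentiableAt ℂ (dslope f w) z :=
    fun z hz => (differentiableAt_dslope_of_ne hz.2).2 (hd z hz.1)
  -- `dslope f w` is continuous at `w` and holomorphic elsewhere, so Cauchy-Goursat applies to it;
  -- the kernel `(z - w)⁻¹` integrates to `2πi` over the outer circle and to `0` over the inner one.
  have hgoursat := circleIntegral_eq_of_differentiable_on_annulus_off_countable h0
    (hrw.trans hwR).le (countable_singleton w) hcF hdF
  have hsphere_R : sphere c R ⊆ closedBall c R \ ball c r := fun z hz =>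
    ⟨sphere_subset_closedBall hz, by simpa [mem_sphere.1 hz] using (hrw.trans hwR).le⟩
  have hsphere_r : sphere c r ⊆ closedBall c R \ ball c r := fun z hz =>
    ⟨by simpa [mem_closedBall, mem_sphere.1 hz] using (hrw.trans hwR).le,
      by simp [mem_sphere.1 hz]⟩
  rw [circleIntegral_dslope (h0.le.trans (hrw.trans hwR).le) (fun h => hwR.ne (mem_sphere.1 h))
      (hc.mono hsphere_R),
    circleIntegral_dslope h0.le (fun h => hrw.ne' (mem_sphere.1 h)) (hc.mono hsphere_r),
    circleIntegral.integral_sub_inv_of_mem_ball hw.1,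
    circleIntegral_sub_inv_of_notMem_closedBall h0.le hw.2, zero_smul, sub_zero] at hgoursat
  rw [← hgoursat, sub_sub_cancel]

theorem norm_le_of_differentiable_on_annulus {c w : ℂ} {r R Mr MR : ℝ} {f : ℂ → E}
    (h0 : 0 < r) (hw : w ∈ ball c R \ closedBall c r)
    (hc : ContinuousOn f (closedBall c R \ ball c r))
    (hd : ∀ z ∈ ball c R \ closedBall c r, DifferentiableAt ℂ f z)
    (hMR : ∀ z ∈ sphere c R, ‖f z‖ ≤ MR) (hMr : ∀ z ∈ sphere c r, ‖f z‖ ≤ Mr) :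
    ‖f w‖ ≤ R * MR / (R - ‖w - c‖) + r * Mr / (‖w - c‖ - r) := by
  have hrw : r < ‖w - c‖ := not_le.1 (mt mem_closedBall_iff_norm.2 hw.2)
  have hwR : ‖w - c‖ < R := mem_ball_iff_norm.1 hw.1
  have hcauchy := circleIntegral_sub_inv_smul_sub_of_differentiable_on_annulus h0 hw hc hd
  have hbound_R :=
    norm_circleIntegral_sub_inv_smul_le (h0.le.trans (hrw.trans hwR).le) hwR.ne hMR
  have hbound_r := norm_circleIntegral_sub_inv_smul_le h0.le hrw.ne' hMr
  rw [abs_of_pos (sub_pos.2 hwR)] at hbound_R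
  rw [abs_of_neg (sub_neg.2 hrw), neg_sub] at hbound_r
  have h2π : (0 : ℝ) < 2 * π := two_pi_pos
  refine le_of_mul_le_mul_left ?_ h2π
  calc 2 * π * ‖f w‖ = ‖(2 * π * I : ℂ) • f w‖ := by
        rw [norm_smul]; simp [abs_of_pos pi_pos]
    _ ≤ ‖∮ z in C(c, R), (z - w)⁻¹ • f z‖ + ‖∮ z in C(c, r), (z - w)⁻¹ • f z‖ :=
        hcauchy ▸ norm_sub_le _ _
    _ ≤ 2 * π * R * (MR / (R - ‖w - c‖)) + 2 * π * r * (Mr / (‖w - c‖ - r)) :=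
        add_le_add hbound_R hbound_r
    _ = 2 * π * (R * MR / (R - ‖w - c‖) + r * Mr / (‖w - c‖ - r)) := by ring

end Complex

theorem stmt_6_general (d c ε K : ℝ) (hd : 0 < d) (hdc : d < c) (hc : c < 1)
    (f : ℂ → ℂ)
    (hf : ∃ U : Set ℂ, IsOpen U ∧
      {z : ℂ | d ≤ ‖z‖ ∧ ‖z‖ ≤ 1} ⊆ U ∧ DifferentiableOn ℂ f U)
    (h1 : ∀ z : ℂ, ‖z‖ = 1 → ‖f z‖ ≤ K * ε)
    (hd' : ∀ z : ℂ, ‖z‖ = d → ‖f z‖ ≤ K) :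
    ‖f (c : ℂ)‖ ≤ K * ε / (1 - c) + K * d / (c - d) := by
  obtain ⟨U, hU, hannulus, hfU⟩ := hf
  have hclosed : closedBall (0 : ℂ) 1 \ ball 0 d ⊆ U := fun z hz =>
    hannulus ⟨by simpa using hz.2, by simpa using hz.1⟩
  have hcw : (c : ℂ) ∈ ball (0 : ℂ) 1 \ closedBall 0 d := by
    simp [abs_of_pos (hd.trans hdc), hc, hdc]
  have hbound := Complex.norm_le_of_differentiable_on_annulus hd hcw
    (hfU.continuousOn.mono hclosed)
    (fun z hz => hfU.differentiableAt (hU.mem_nhds (hclosed (sdiff_subset_sdiff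
      ball_subset_closedBall ball_subset_closedBall hz))))
    (fun z hz => h1 z (by simpa using hz)) (fun z hz => hd' z (by simpa using hz))
  simpa [abs_of_pos (hd.trans hdc), mul_comm] using hbound

theorem stmt_6 (d c ε K : ℝ) (hd : 0 < d) (hdc : d < c) (hc : c < 1)
    (hε : 0 < ε) (hK : 0 < K) (f : ℂ → ℂ)
    (hf : ∃ U : Set ℂ, IsOpen U ∧
      {z : ℂ | d ≤ ‖z‖ ∧ ‖z‖ ≤ 1} ⊆ U ∧ DifferentiableOn ℂ f U)
    (h1 : ∀ z : ℂ, ‖z‖ = 1 → ‖f z‖ ≤ K * ε)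
    (hd' : ∀ z : ℂ, ‖z‖ = d → ‖f z‖ ≤ K) :
    ‖f (c : ℂ)‖ ≤ K * ε / (1 - c) + K * d / (c - d) :=
  stmt_6_general d c ε K hd hdc hc f hf h1 hd'
end

section
/- Let 0 < d < c < 1 and let f be holomorphic on a neighborhood of the closed annulus {d ≤ |z| ≤ 1}. If f(c) = 1, |f| ≤ Kε on the circle |z| = 1 and |f| ≤ K on the circle |z| = d, then K ≥ 1/(ε/(1-c) + d/(c-d)). -/
open Complex Metric Real

theorem stmt_7 (d c ε K : ℝ) (hd : 0 < d) (hdc : d < c) (hc : c < 1)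
    (hε : 0 < ε) (hK : 0 < K) (f : ℂ → ℂ)
    (hf : ∃ U : Set ℂ, IsOpen U ∧
      {z : ℂ | d ≤ ‖z‖ ∧ ‖z‖ ≤ 1} ⊆ U ∧ DifferentiableOn ℂ f U)
    (hfc : f (c : ℂ) = 1)
    (h1 : ∀ z : ℂ, ‖z‖ = 1 → ‖f z‖ ≤ K * ε)
    (hd' : ∀ z : ℂ, ‖z‖ = d → ‖f z‖ ≤ K) :
    K ≥ (ε / (1 - c) + d / (c - d))⁻¹ := by
  obtain ⟨U, hUo, hUsub, hUdiff⟩ := hf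
  have hc0 : (0:ℝ) < c := hd.trans hdc
  have habsc : ‖(c : ℂ)‖ = c := by
    rw [Complex.norm_real, Real.norm_eq_abs, abs_of_pos hc0]
  have hd1 : d ≤ 1 := hdc.le.trans hc.le
  have hannsub : closedBall (0:ℂ) 1 \ ball (0:ℂ) d ⊆ U := by
    intro z hz
    refine hUsub ?_
    simp only [Set.mem_diff, mem_closedBall, mem_ball, Complex.dist_eq, sub_zero,
      not_lt] at hz
    exact ⟨hz.2, hz.1⟩
  have hcU : (c:ℂ) ∈ U := by
    refine hUsub ⟨?_, ?_⟩ <;> rw [habsc]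
    exacts [hdc.le, hc.le]
  have hg : DifferentiableOn ℂ (dslope f (c:ℂ)) U :=
    (differentiableOn_dslope (hUo.mem_nhds hcU)).2 hUdiff
  -- Cauchy-Goursat on the annulus for the difference quotient
  have key : (∮ z in C(0, 1), dslope f (c:ℂ) z) = ∮ z in C(0, d), dslope f (c:ℂ) z := by
    refine Complex.circleIntegral_eq_of_differentiable_on_annulus_off_countable hd hd1
      Set.countable_empty (hg.continuousOn.mono hannsub) ?_
    intro z hz
    have hzU : z ∈ U := hannsub ⟨ball_subset_closedBall hz.1.1,
      fun h => hz.1.2 (ball_subset_closedBall h)⟩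
    exact (hg z hzU).differentiableAt (hUo.mem_nhds hzU)
  -- points on the circles are distinct from c
  have hne1 : ∀ z ∈ sphere (0:ℂ) 1, z ≠ (c:ℂ) := by
    intro z hz h
    rw [mem_sphere_zero_iff_norm, h, habsc] at hz
    exact hc.ne hz
  have hned : ∀ z ∈ sphere (0:ℂ) d, z ≠ (c:ℂ) := by
    intro z hz h
    rw [mem_sphere_zero_iff_norm, h, habsc] at hz
    exact hdc.ne' hz
  -- rewrite dslope on the circles
  have hcirc : ∀ z : ℂ, z ≠ (c:ℂ) →
      dslope f (c:ℂ) z = (z - c)⁻¹ * f z - (z - c)⁻¹ := by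
    intro z hzc
    rw [dslope_of_ne f hzc, slope_def_field, hfc, div_eq_inv_mul]
    ring
  -- continuity / integrability on the circles
  have hfco : ContinuousOn f U := hUdiff.continuousOn
  have hsub1 : sphere (0:ℂ) 1 ⊆ U := fun z hz => by
    rw [mem_sphere_zero_iff_norm] at hz
    exact hUsub ⟨by rw [hz]; exact hd1, by
      rw [hz]⟩
  have hsubd : sphere (0:ℂ) d ⊆ U := fun z hz => by
    rw [mem_sphere_zero_iff_norm] at hz
    exact hUsub ⟨le_of_eq hz.symm, by rw [hz]; exact hd1⟩
  have hcont : ∀ R : ℝ, (∀ z ∈ sphere (0:ℂ) R, z ≠ (c:ℂ)) → sphere (0:ℂ) R ⊆ U →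
      ContinuousOn (fun z => (z - (c:ℂ))⁻¹ * f z) (sphere (0:ℂ) R) := by
    intro R hne hsub
    exact ((continuousOn_id.sub continuousOn_const).inv₀
      (fun z hz => sub_ne_zero.2 (hne z hz))).mul (hfco.mono hsub)
  have hi1 : CircleIntegrable (fun z => (z - (c:ℂ))⁻¹ * f z) 0 1 :=
    (hcont 1 hne1 hsub1).circleIntegrable zero_le_one
  have hid : CircleIntegrable (fun z => (z - (c:ℂ))⁻¹ * f z) 0 d :=
    (hcont d hned hsubd).circleIntegrable hd.le
  have hj1 : CircleIntegrable (fun z => (z - (c:ℂ))⁻¹) 0 1 :=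
    circleIntegrable_sub_inv_iff.2 (Or.inr fun h => hne1 _ (by simpa using h) rfl)
  have hjd : CircleIntegrable (fun z => (z - (c:ℂ))⁻¹) 0 d :=
    circleIntegrable_sub_inv_iff.2 (Or.inr fun h => hned _ (by rwa [abs_of_pos hd] at h) rfl)
  -- evaluate the (z-c)⁻¹ integrals
  have hJ1 : (∮ z in C(0, 1), (z - (c:ℂ))⁻¹) = 2 * π * I := by
    refine circleIntegral.integral_sub_inv_of_mem_ball ?_
    rw [mem_ball, Complex.dist_eq, sub_zero, habsc]
    exact hc
  have hJd : (∮ z in C(0, d), (z - (c:ℂ))⁻¹) = 0 := by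
    refine Complex.circleIntegral_eq_zero_of_differentiable_on_off_countable hd.le
      Set.countable_empty ?_ ?_
    · refine (continuousOn_id.sub continuousOn_const).inv₀ ?_
      intro z hz
      refine sub_ne_zero.2 fun h => ?_
      simp only [id_eq] at h
      rw [mem_closedBall, Complex.dist_eq, sub_zero, h, habsc] at hz
      exact absurd hz (not_le.2 hdc)
    · intro z hz
      refine ((differentiableAt_id.sub_const _).inv ?_)
      refine sub_ne_zero.2 fun h => ?_
      have hz1 := hz.1
      rw [mem_ball, Complex.dist_eq, sub_zero, h, habsc] at hz1
      exact absurd hz1 (not_lt.2 hdc.le)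
  -- the two dslope circle integrals
  have hD1 : (∮ z in C(0, 1), dslope f (c:ℂ) z)
      = (∮ z in C(0, 1), (z - (c:ℂ))⁻¹ * f z) - 2 * π * I := by
    rw [← hJ1, ← circleIntegral.integral_sub hi1 hj1]
    exact circleIntegral.integral_congr zero_le_one fun z hz => hcirc z (hne1 z hz)
  have hDd : (∮ z in C(0, d), dslope f (c:ℂ) z)
      = (∮ z in C(0, d), (z - (c:ℂ))⁻¹ * f z) - (∮ z in C(0, d), (z - (c:ℂ))⁻¹) := by
    rw [← circleIntegral.integral_sub hid hjd]
    exact circleIntegral.integral_congr hd.le fun z hz => hcirc z (hned z hz)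
  have hmain : (∮ z in C(0, 1), (z - (c:ℂ))⁻¹ * f z)
      - (∮ z in C(0, d), (z - (c:ℂ))⁻¹ * f z) = 2 * π * I := by
    rw [hD1, hDd, hJd] at key
    linear_combination key
  -- norm bounds
  have h1c : (0:ℝ) < 1 - c := by linarith
  have hcd : (0:ℝ) < c - d := by linarith
  have hb1 : ‖∮ z in C(0, 1), (z - (c:ℂ))⁻¹ * f z‖ ≤ 2 * π * 1 * (K * ε / (1 - c)) := by
    refine circleIntegral.norm_integral_le_of_norm_le_const zero_le_one ?_
    intro z hz
    rw [mem_sphere_zero_iff_norm] at hz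
    have hzc : 1 - c ≤ ‖z - (c:ℂ)‖ := by
      have := norm_sub_norm_le z (c:ℂ)
      rw [hz, habsc] at this
      linarith
    rw [norm_mul, norm_inv]
    have hfz : ‖f z‖ ≤ K * ε := by
      exact h1 z (by rw [hz])
    calc ‖z - (c:ℂ)‖⁻¹ * ‖f z‖ ≤ (1 - c)⁻¹ * (K * ε) := by
          gcongr
      _ = K * ε / (1 - c) := by ring
  have hbd : ‖∮ z in C(0, d), (z - (c:ℂ))⁻¹ * f z‖ ≤ 2 * π * d * (K / (c - d)) := by
    refine circleIntegral.norm_integral_le_of_norm_le_const hd.le ?_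
    intro z hz
    rw [mem_sphere_zero_iff_norm] at hz
    have hzc : c - d ≤ ‖z - (c:ℂ)‖ := by
      have := norm_sub_norm_le (c:ℂ) z
      rw [hz, habsc, ← norm_neg, neg_sub] at this
      linarith
    rw [norm_mul, norm_inv]
    have hfz : ‖f z‖ ≤ K := by
      exact hd' z (by rw [hz])
    calc ‖z - (c:ℂ)‖⁻¹ * ‖f z‖ ≤ (c - d)⁻¹ * K := by
          gcongr
      _ = K / (c - d) := by ring
  have hnorm2pi : ‖(2 * ↑π * I : ℂ)‖ = 2 * π := by
    simp [norm_mul, _root_.abs_of_nonneg Real.pi_pos.le]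
  have hineq : 2 * π ≤ 2 * π * (K * ε / (1 - c)) + 2 * π * (K / (c - d)) * d := by
    have := norm_sub_le (∮ z in C(0, 1), (z - (c:ℂ))⁻¹ * f z)
      (∮ z in C(0, d), (z - (c:ℂ))⁻¹ * f z)
    rw [hmain, hnorm2pi] at this
    nlinarith
  have hpi : (0:ℝ) < 2 * π := by positivity
  have hS : (0:ℝ) < ε / (1 - c) + d / (c - d) := by positivity
  have h1le : 1 ≤ K * (ε / (1 - c) + d / (c - d)) := by
    have h2 : 2 * π * 1 ≤ 2 * π * (K * (ε / (1 - c) + d / (c - d))) := by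
      calc 2 * π * 1 = 2 * π := by ring
        _ ≤ 2 * π * (K * ε / (1 - c)) + 2 * π * (K / (c - d)) * d := hineq
        _ = 2 * π * (K * (ε / (1 - c) + d / (c - d))) := by ring
    exact le_of_mul_le_mul_left h2 hpi
  rw [ge_iff_le, inv_eq_one_div, div_le_iff₀ hS]
  exact h1le
end

section
/- Let δ ∈ (0,1), n ≥ 1 with δ^n ≤ 1/4, c = 2δ^(n²), d = 4δ^(n²+n). Then for any z₂ ∈ ℂ with |z₂| < δ and any z₁ ∈ ℂ with |z₁| ≤ 1 and 1 - c·z₁^n ≠ 0 satisfying (z₁^n - c)/(1 - c·z₁^n) = z₂^(n²), the point z₁ is nonzero; in fact |z₁|^n > d (i.e., z₁ lies in the domain D₁). -/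
/-!
Writing `a = δ^(n²)` and `w = z₂^(n²)`, the relation says `z₁ⁿ = (2a + w) / (1 + 2a w)`
with `‖w‖ ≤ a`. This Möbius map sends the disc of radius `a` outside itself, so
`‖z₁‖ⁿ > a`, and `a ≥ 4 δ^(n²+n)` because `4 δⁿ ≤ 1`.
-/

theorem Complex.sq_norm_ofReal_add (r : ℝ) (w : ℂ) :
    ‖(r : ℂ) + w‖ ^ 2 = r ^ 2 + 2 * r * w.re + ‖w‖ ^ 2 := by
  simp only [Complex.sq_norm, Complex.normSq_add, Complex.normSq_ofReal, Complex.re_ofReal_mul,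
    Complex.conj_re]
  ring

theorem Complex.sq_norm_one_add_ofReal_mul (r : ℝ) (w : ℂ) :
    ‖1 + (r : ℂ) * w‖ ^ 2 = 1 + 2 * r * w.re + r ^ 2 * ‖w‖ ^ 2 := by
  simp only [Complex.sq_norm, Complex.normSq_add, Complex.normSq_one, Complex.normSq_ofReal,
    map_mul, Complex.conj_ofReal, one_mul, Complex.re_ofReal_mul, Complex.conj_re]
  ring

theorem mul_norm_one_add_lt_norm_add {a : ℝ} (ha0 : 0 < a) (ha1 : a < 1) {w : ℂ}
    (hw : ‖w‖ ≤ a) : a * ‖1 + (2 * a : ℝ) * w‖ < ‖((2 * a : ℝ) : ℂ) + w‖ := by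
  refine lt_of_pow_lt_pow_left₀ 2 (norm_nonneg _) ?_
  rw [mul_pow, Complex.sq_norm_ofReal_add, Complex.sq_norm_one_add_ofReal_mul]
  set s := ‖w‖
  set u := w.re
  have hu : -s ≤ u := neg_le_of_abs_le (Complex.abs_re_le_norm w)
  have ha2 : 0 < 1 - a ^ 2 := by nlinarith
  have hbracket : (1 - 4 * a ^ 4) * (s + a) ≤ 4 * a * (1 - a ^ 2) := by
    nlinarith [mul_nonneg (pow_nonneg ha0.le 4) (sub_nonneg.2 hw), norm_nonneg w,
      mul_nonneg ha0.le (sq_nonneg (2 * a ^ 2 - 1))]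
  -- The gap, as a quadratic in `s`, is smallest at `s = a`, where it equals `4a⁴(1 - a²)`.
  have hsplit :
      (2 * a) ^ 2 + 2 * (2 * a) * u + s ^ 2 - a ^ 2 * (1 + 2 * (2 * a) * u + (2 * a) ^ 2 * s ^ 2) =
        4 * a ^ 4 * (1 - a ^ 2) + (a - s) * (4 * a * (1 - a ^ 2) - (1 - 4 * a ^ 4) * (s + a)) +
          4 * a * (1 - a ^ 2) * (u + s) := by
    ring
  have h₁ : 0 < 4 * a ^ 4 * (1 - a ^ 2) := by positivity
  have h₂ := mul_nonneg (sub_nonneg.2 hw) (sub_nonneg.2 hbracket)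
  have h₃ : 0 ≤ 4 * a * (1 - a ^ 2) * (u + s) := mul_nonneg (by positivity) (by linarith)
  linarith

theorem stmt_12_general (δ : ℝ) (n : ℕ) (hδ0 : 0 < δ) (hδ1 : δ < 1) (hn : 1 ≤ n)
    (hδn : δ ^ n ≤ 1 / 4) (z₁ z₂ : ℂ) (hz2 : ‖z₂‖ < δ)
    (hden : 1 - (2 * δ ^ (n ^ 2) : ℂ) * z₁ ^ n ≠ 0)
    (hrel : (z₁ ^ n - (2 * δ ^ (n ^ 2) : ℂ)) / (1 - (2 * δ ^ (n ^ 2) : ℂ) * z₁ ^ n)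
        = z₂ ^ (n ^ 2)) :
    z₁ ≠ 0 ∧ ‖z₁‖ ^ n > 4 * δ ^ (n ^ 2 + n) := by
  set a := δ ^ (n ^ 2) with ha
  set w := z₂ ^ (n ^ 2)
  have ha0 : 0 < a := by positivity
  have ha1 : a < 1 := pow_lt_one₀ hδ0.le hδ1 (by positivity)
  have hw : ‖w‖ ≤ a := by
    rw [norm_pow]
    exact pow_le_pow_left₀ (norm_nonneg _) hz2.le _
  have hfix : z₁ ^ n * (1 + (2 * a : ℝ) * w) = ((2 * a : ℝ) : ℂ) + w := by
    rw [div_eq_iff hden] at hrel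
    push_cast [ha]
    linear_combination hrel
  have ha_lt : a < ‖z₁‖ ^ n := by
    refine lt_of_mul_lt_mul_right ?_ (norm_nonneg (1 + (2 * a : ℝ) * w))
    exact (mul_norm_one_add_lt_norm_add ha0 ha1 hw).trans_eq (by rw [← hfix, norm_mul, norm_pow])
  have hd_le : 4 * δ ^ (n ^ 2 + n) ≤ a := by
    rw [pow_add]
    nlinarith
  refine ⟨fun h => ?_, by linarith⟩
  rw [h, norm_zero, zero_pow (by omega)] at ha_lt
  linarith

theorem stmt_12 (δ : ℝ) (n : ℕ) (hδ0 : 0 < δ) (hδ1 : δ < 1) (hn : 1 ≤ n)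
    (hδn : δ ^ n ≤ 1 / 4) (z₁ z₂ : ℂ) (hz2 : ‖z₂‖ < δ)
    (hz1 : ‖z₁‖ ≤ 1)
    (hden : 1 - (2 * δ ^ (n ^ 2) : ℂ) * z₁ ^ n ≠ 0)
    (hrel : (z₁ ^ n - (2 * δ ^ (n ^ 2) : ℂ)) / (1 - (2 * δ ^ (n ^ 2) : ℂ) * z₁ ^ n)
        = z₂ ^ (n ^ 2)) :
    z₁ ≠ 0 ∧ ‖z₁‖ ^ n > 4 * δ ^ (n ^ 2 + n) :=
  stmt_12_general δ n hδ0 hδ1 hn hδn z₁ z₂ hz2 hden hrel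
end

section
/- For any δ ∈ (0,1) and M > 0 there exist n ≥ 1 and reals c, d with 0 < d < c < 1/2 such that: (i) any z₁, z₂ ∈ ℂ with |z₁| ≤ 1, 1 - c z₁^n ≠ 0, (z₁^n - c)/(1 - c z₁^n) = z₂^(n²), and |z₂| < δ satisfy |d^(1/n)/z₁| > δ; and (ii) 4δ^(n+1)/(1-c) + d/(c-d) < 1/M. -/
/-!
Take `n` with `δ ^ n` small and put `c = 2 δ^(n²)`, `d = 4 δ^(n²+n)`. Solving the Möbius relation
for `z₁ ^ n` gives `z₁ ^ n = z₂^(n²) (1 - c z₁ ^ n) + c`, so `|z₁|^n < δ^(n²) (1 + c) + c < 4 δ^(n²)`,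
which is `(δ |z₁|)^n < d`, i.e. (i). Inequality (ii) is elementary once `δ ^ n < 1/(16 M)`,
since `c - d ≥ δ^(n²)`.
-/

theorem norm_le_of_div_one_sub_mul_eq {𝕜 : Type*} [NormedField 𝕜] {u w c : 𝕜} (hu : ‖u‖ ≤ 1)
    (hne : 1 - c * u ≠ 0) (heq : (u - c) / (1 - c * u) = w) :
    ‖u‖ ≤ ‖w‖ * (1 + ‖c‖) + ‖c‖ := by
  have hu_eq : u = w * (1 - c * u) + c := by
    rw [← heq, div_mul_cancel₀ _ hne]
    ring
  have h_denom : ‖1 - c * u‖ ≤ 1 + ‖c‖ :=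
    calc ‖1 - c * u‖ ≤ ‖(1 : 𝕜)‖ + ‖c * u‖ := norm_sub_le _ _
      _ ≤ 1 + ‖c‖ := by
        rw [norm_one, norm_mul]
        gcongr
        exact mul_le_of_le_one_right (norm_nonneg c) hu
  calc ‖u‖ = ‖w * (1 - c * u) + c‖ := congrArg norm hu_eq
    _ ≤ ‖w * (1 - c * u)‖ + ‖c‖ := norm_add_le _ _
    _ ≤ ‖w‖ * (1 + ‖c‖) + ‖c‖ := by
      rw [norm_mul]
      gcongr

theorem lt_norm_rpow_div_of_div_one_sub_mul_eq {δ : ℝ} {n : ℕ} (hn : n ≠ 0) (hδ : 0 < δ)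
    (hc : 2 * δ ^ (n ^ 2) ≤ 1) {z₁ z₂ : ℂ} (hz₁ : ‖z₁‖ ≤ 1)
    (hne : 1 - ((2 * δ ^ (n ^ 2) : ℝ) : ℂ) * z₁ ^ n ≠ 0)
    (heq : (z₁ ^ n - ((2 * δ ^ (n ^ 2) : ℝ) : ℂ)) / (1 - ((2 * δ ^ (n ^ 2) : ℝ) : ℂ) * z₁ ^ n)
      = z₂ ^ (n ^ 2))
    (hz₂ : ‖z₂‖ < δ) :
    δ < ‖(((4 * δ ^ (n ^ 2 + n)) ^ ((1 : ℝ) / n) : ℝ) : ℂ) / z₁‖ := by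
  set ε := δ ^ (n ^ 2)
  have hε : 0 < ε := by positivity
  have hc_norm : ‖((2 * ε : ℝ) : ℂ)‖ = 2 * ε := by
    rw [Complex.norm_real, Real.norm_of_nonneg (by positivity)]
  have hz₂_pow : ‖z₂ ^ (n ^ 2)‖ < ε := by
    rw [norm_pow]
    exact pow_lt_pow_left₀ hz₂ (norm_nonneg _) (by positivity)
  have hz₁_ne : z₁ ≠ 0 := by
    rintro rfl
    have : z₂ ^ (n ^ 2) = -((2 * ε : ℝ) : ℂ) := by simpa [zero_pow hn] using heq.symm
    rw [this, norm_neg, hc_norm] at hz₂_pow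
    linarith
  have hz₁_pow : (δ * ‖z₁‖) ^ n < 4 * δ ^ (n ^ 2 + n) := by
    have h := norm_le_of_div_one_sub_mul_eq (by simpa using pow_le_one₀ (norm_nonneg _) hz₁)
      hne heq
    rw [hc_norm, norm_pow] at h
    have h4 : ‖z₁‖ ^ n < 4 * ε := by nlinarith [norm_nonneg (z₂ ^ (n ^ 2))]
    rw [mul_pow, pow_add, mul_comm (δ ^ n), ← mul_assoc]
    exact mul_lt_mul_of_pos_right h4 (pow_pos hδ n)
  rw [norm_div, Complex.norm_real, Real.norm_of_nonneg (by positivity),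
    lt_div_iff₀ (norm_pos_iff.mpr hz₁_ne), one_div,
    Real.lt_rpow_inv_iff_of_pos (by positivity) (by positivity) (by positivity), Real.rpow_natCast]
  exact hz₁_pow

theorem pow_succ_div_add_div_lt_one_div {δ M : ℝ} {n : ℕ} (hδ0 : 0 < δ) (hδ1 : δ ≤ 1)
    (hM : 0 < M) (hnM : δ ^ n < 1 / (16 * M)) (hn4 : δ ^ n < 1 / 4) :
    4 * δ ^ (n + 1) / (1 - 2 * δ ^ (n ^ 2))
      + 4 * δ ^ (n ^ 2 + n) / (2 * δ ^ (n ^ 2) - 4 * δ ^ (n ^ 2 + n)) < 1 / M := by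
  set t := δ ^ n
  set ε := δ ^ (n ^ 2)
  have ht : 0 < t := by positivity
  have hε : 0 < ε := by positivity
  have hεt : ε ≤ t := pow_le_pow_of_le_one hδ0.le hδ1 (Nat.le_self_pow (by norm_num) n)
  have hδt : δ ^ (n + 1) ≤ t := pow_le_pow_of_le_one hδ0.le hδ1 n.le_succ
  have h16 : 16 * t < 1 / M := by
    rw [lt_div_iff₀ hM]
    rw [lt_div_iff₀ (by positivity)] at hnM
    linarith
  have h_first : 4 * δ ^ (n + 1) / (1 - 2 * ε) < 8 * t := by
    rw [div_lt_iff₀ (by linarith)]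
    nlinarith
  have h_second : 4 * δ ^ (n ^ 2 + n) / (2 * ε - 4 * δ ^ (n ^ 2 + n)) < 4 * t := by
    rw [pow_add, div_lt_iff₀ (by nlinarith)]
    nlinarith [mul_pos hε ht]
  linarith

theorem stmt_18 (δ M : ℝ) (hδ0 : 0 < δ) (hδ1 : δ < 1) (hM : 0 < M) :
    ∃ (n : ℕ) (c d : ℝ), 1 ≤ n ∧ 0 < d ∧ d < c ∧ c < 1 / 2 ∧
      (∀ z₁ z₂ : ℂ, ‖z₁‖ ≤ 1 →
        1 - (c : ℂ) * z₁ ^ n ≠ 0 →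
        (z₁ ^ n - (c : ℂ)) / (1 - (c : ℂ) * z₁ ^ n) = z₂ ^ (n ^ 2) →
        ‖z₂‖ < δ →
        ‖((d ^ ((1 : ℝ) / n) : ℝ) / z₁)‖ > δ) ∧
      4 * δ ^ (n + 1) / (1 - c) + d / (c - d) < 1 / M := by
  obtain ⟨n, hn1, hnM, hn4⟩ : ∃ n, 1 ≤ n ∧ δ ^ n < 1 / (16 * M) ∧ δ ^ n < 1 / 4 :=
    ((Filter.eventually_ge_atTop 1).and
      ((tendsto_pow_atTop_nhds_zero_of_lt_one hδ0.le hδ1).eventually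
        ((gt_mem_nhds (by positivity)).and (gt_mem_nhds (by norm_num))))).exists
  have hεt : δ ^ (n ^ 2) ≤ δ ^ n :=
    pow_le_pow_of_le_one hδ0.le hδ1.le (Nat.le_self_pow (by norm_num) n)
  have hε : 0 < δ ^ (n ^ 2) := by positivity
  refine ⟨n, 2 * δ ^ (n ^ 2), 4 * δ ^ (n ^ 2 + n), hn1, by positivity, ?_, by linarith,
    fun z₁ z₂ hz₁ hne heq hz₂ =>
      lt_norm_rpow_div_of_div_one_sub_mul_eq (by omega) hδ0 (by linarith) hz₁ hne heq hz₂,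
    pow_succ_div_add_div_lt_one_div hδ0 hδ1.le hM hnM hn4⟩
  rw [pow_add]
  nlinarith
end
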